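/- Let σ > 0, c ∈ ℝ, T > 0, and for 0 ≤ t < T and x > 0 define w(x,t) = N(d₊(x,t)) − x^{1 − 2c/σ²}·N(d₋(x,t)), where d₊(x,t) = (ln x + (c − σ²/2)(T−t))/(σ√(T−t)) and d₋(x,t) = (ln(1/x) + (c − σ²/2)(T−t))/(σ√(T−t)). Then w satisfies the PDE ∂w/∂t + ½σ²x²·∂²w/∂x² + c·x·∂w/∂x = 0 for all x > 0 and 0 < t < T. -/

import Mathlib

/-!
In the log-price `y = log x` the Black–Scholes operator becomes the backward Kolmogorov operator
`∂ₜ + ½σ²∂ᵧᵧ + μ∂ᵧ` of Brownian motion with drift `μ = c - σ²/2`. The first term `N(d₊)` solves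
it by a direct Gaussian computation. For `α = 1 - 2c/σ²` one has `σ²α = -2μ`, which is exactly
the condition for the reflection `g(y, t) ↦ e^{αy} g(-y, t)` to map solutions to solutions, and
the second term of `w` is the reflection of the first.
-/

open Real Set Filter Topology

noncomputable def stdNormalCDF (x : ℝ) : ℝ :=
  (Real.sqrt (2 * Real.pi))⁻¹ * ∫ t in Set.Iic x, Real.exp (-t ^ 2 / 2)

open MeasureTheory
open scoped ContDiff

noncomputable def stdNormalPDF (x : ℝ) : ℝ := (√(2 * π))⁻¹ * exp (-x ^ 2 / 2)

lemma integrable_exp_neg_sq_div_two : Integrable fun t : ℝ => exp (-t ^ 2 / 2) := by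
  simpa [div_eq_inv_mul, neg_mul, mul_comm] using
    integrable_exp_neg_mul_sq (by norm_num : (0:ℝ) < 2⁻¹)

lemma hasDerivAt_stdNormalCDF (x : ℝ) : HasDerivAt stdNormalCDF (stdNormalPDF x) x := by
  have hi := integrable_exp_neg_sq_div_two
  have hcont : Continuous fun t : ℝ => exp (-t ^ 2 / 2) := by fun_prop
  have hsplit : stdNormalCDF = fun y => (√(2 * π))⁻¹ *
      ((∫ t in Iic 0, exp (-t ^ 2 / 2)) + ∫ t in (0:ℝ)..y, exp (-t ^ 2 / 2)) := by
    funext y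
    rw [stdNormalCDF, ← intervalIntegral.integral_Iic_sub_Iic hi.integrableOn hi.integrableOn]
    ring
  rw [hsplit]
  exact ((intervalIntegral.integral_hasDerivAt_right hi.intervalIntegrable
    (hcont.stronglyMeasurableAtFilter _ _) hcont.continuousAt).const_add _).const_mul _

lemma hasDerivAt_stdNormalPDF (x : ℝ) : HasDerivAt stdNormalPDF (-x * stdNormalPDF x) x := by
  have hexp : HasDerivAt (fun y : ℝ => -y ^ 2 / 2) (-x) x :=
    ((hasDerivAt_pow 2 x).neg.div_const 2).congr_deriv (by ring)
  unfold stdNormalPDF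
  exact (hexp.exp.const_mul _).congr_deriv (by ring)

lemma contDiff_stdNormalCDF : ContDiff ℝ ∞ stdNormalCDF := by
  have hderiv : deriv stdNormalCDF = stdNormalPDF :=
    funext fun x => (hasDerivAt_stdNormalCDF x).deriv
  refine contDiff_infty_iff_deriv.mpr ⟨fun x => (hasDerivAt_stdNormalCDF x).differentiableAt, ?_⟩
  rw [hderiv]
  unfold stdNormalPDF
  fun_prop

lemma ContDiff.differentiable_deriv_of_two {G : ℝ → ℝ} (hG : ContDiff ℝ 2 G) :
    Differentiable ℝ (deriv G) :=
  (hG.deriv' (n := 1)).differentiable one_ne_zero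

section LogCoordinates

variable {G : ℝ → ℝ} {x : ℝ}

lemma deriv_comp_log_eventuallyEq (hG : Differentiable ℝ G) (hx : 0 < x) :
    deriv (fun y => G (log y)) =ᶠ[𝓝 x] fun y => deriv G (log y) * y⁻¹ := by
  filter_upwards [Ioi_mem_nhds hx] with y hy
  exact ((hG _).hasDerivAt.comp y (hasDerivAt_log (ne_of_gt hy))).deriv

lemma mul_deriv_comp_log (hG : Differentiable ℝ G) (hx : 0 < x) :
    x * deriv (fun y => G (log y)) x = deriv G (log x) := by
  rw [(deriv_comp_log_eventuallyEq hG hx).eq_of_nhds]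
  field_simp

lemma sq_mul_deriv_deriv_comp_log (hG : ContDiff ℝ 2 G) (hx : 0 < x) :
    x ^ 2 * deriv (deriv fun y => G (log y)) x = deriv (deriv G) (log x) - deriv G (log x) := by
  have hG' : HasDerivAt (fun y => deriv G (log y) * y⁻¹)
      (deriv (deriv G) (log x) * x⁻¹ * x⁻¹ + deriv G (log x) * -(x ^ 2)⁻¹) x :=
    ((hG.differentiable_deriv_of_two _).hasDerivAt.comp x (hasDerivAt_log hx.ne')).mul
      (hasDerivAt_inv hx.ne')
  rw [(deriv_comp_log_eventuallyEq (hG.differentiable two_ne_zero) hx).deriv_eq, hG'.deriv]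
  field_simp
  ring

end LogCoordinates

noncomputable def blackScholesOp (σ c : ℝ) (W : ℝ → ℝ → ℝ) (x t : ℝ) : ℝ :=
  deriv (fun s => W x s) t + (1 / 2) * σ ^ 2 * x ^ 2 * deriv (deriv (fun y => W y t)) x +
    c * x * deriv (fun y => W y t) x

noncomputable def kolmogorovOp (σ μ : ℝ) (g : ℝ → ℝ → ℝ) (y t : ℝ) : ℝ :=
  deriv (fun s => g y s) t + σ ^ 2 / 2 * deriv (deriv (fun z => g z t)) y +
    μ * deriv (fun z => g z t) y

lemma blackScholesOp_congr {σ c T x t : ℝ} {W W' : ℝ → ℝ → ℝ}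
    (h : ∀ y > 0, ∀ s < T, W y s = W' y s) (hx : 0 < x) (ht : t < T) :
    blackScholesOp σ c W x t = blackScholesOp σ c W' x t := by
  have htime : (fun s => W x s) =ᶠ[𝓝 t] fun s => W' x s := by
    filter_upwards [Iio_mem_nhds ht] with s hs using h x hx s hs
  have hspace : (fun y => W y t) =ᶠ[𝓝 x] fun y => W' y t := by
    filter_upwards [Ioi_mem_nhds hx] with y hy using h y hy t ht
  rw [blackScholesOp, blackScholesOp, htime.deriv_eq, hspace.deriv.deriv_eq, hspace.deriv_eq]

lemma blackScholesOp_comp_log {σ c x t : ℝ} {g : ℝ → ℝ → ℝ}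
    (hg : ContDiff ℝ 2 fun z => g z t) (hx : 0 < x) :
    blackScholesOp σ c (fun y s => g (log y) s) x t =
      kolmogorovOp σ (c - σ ^ 2 / 2) g (log x) t := by
  have h1 := mul_deriv_comp_log (hg.differentiable two_ne_zero) hx
  have h2 := sq_mul_deriv_deriv_comp_log hg hx
  simp only [blackScholesOp, kolmogorovOp]
  linear_combination (σ ^ 2 / 2) * h2 + c * h1

section Kolmogorov

variable {σ μ y t : ℝ} {f g : ℝ → ℝ → ℝ}

lemma kolmogorovOp_sub (hf : ContDiff ℝ 2 fun z => f z t) (hg : ContDiff ℝ 2 fun z => g z t)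
    (hft : DifferentiableAt ℝ (fun s => f y s) t) (hgt : DifferentiableAt ℝ (fun s => g y s) t) :
    kolmogorovOp σ μ (fun z s => f z s - g z s) y t =
      kolmogorovOp σ μ f y t - kolmogorovOp σ μ g y t := by
  have hspace : deriv (fun z => f z t - g z t) =
      fun z => deriv (fun z => f z t) z - deriv (fun z => g z t) z :=
    funext fun z =>
      deriv_fun_sub (hf.differentiable two_ne_zero z) (hg.differentiable two_ne_zero z)
  simp only [kolmogorovOp]
  rw [deriv_fun_sub hft hgt, hspace,
    deriv_fun_sub (hf.differentiable_deriv_of_two y) (hg.differentiable_deriv_of_two y)]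
  ring

lemma deriv_exp_mul_comp_neg {G : ℝ → ℝ} (hG : Differentiable ℝ G) (α : ℝ) :
    deriv (fun z => exp (α * z) * G (-z)) =
      fun z => exp (α * z) * (α * G (-z) - deriv G (-z)) := by
  funext z
  have hexp : HasDerivAt (fun z => exp (α * z)) (exp (α * z) * α) z := by
    simpa using ((hasDerivAt_id z).const_mul α).exp
  have hneg : DifferentiableAt ℝ (fun z => G (-z)) z := (hG (-z)).comp z differentiableAt_id.neg
  rw [deriv_fun_mul hexp.differentiableAt hneg, hexp.deriv, deriv_comp_neg]
  ring

/-- The factor `e^{αy}` produces first- and zeroth-order terms with coefficients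
`-(σ²α + μ)` and `α (σ²α/2 + μ)`; `σ²α = -2μ` turns the first into `μ` and kills the second. -/
lemma kolmogorovOp_reflect {α : ℝ} (hα : σ ^ 2 * α = -2 * μ) (hg : ContDiff ℝ 2 fun z => g z t) :
    kolmogorovOp σ μ (fun z s => exp (α * z) * g (-z) s) y t =
      exp (α * y) * kolmogorovOp σ μ g (-y) t := by
  set G := fun z => g z t
  have hG := hg.differentiable two_ne_zero
  have hH : Differentiable ℝ fun v => α * G v - deriv G v :=
    (hG.const_mul α).sub hg.differentiable_deriv_of_two
  have hH' : deriv (fun v => α * G v - deriv G v) (-y) = α * deriv G (-y) - deriv (deriv G) (-y) :=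
    (((hG _).hasDerivAt.const_mul α).sub (hg.differentiable_deriv_of_two _).hasDerivAt).deriv
  simp only [kolmogorovOp]
  rw [deriv_const_mul_field', deriv_exp_mul_comp_neg hG, deriv_exp_mul_comp_neg hH]
  dsimp only
  rw [hH']
  linear_combination exp (α * y) * (α / 2 * G (-y) - deriv G (-y)) * hα

end Kolmogorov

/-- `N(d₊)` as a function of the log-price `y = log x`, where `μ` stands for `c - σ²/2`. -/
noncomputable def digitalPrice (σ μ T y t : ℝ) : ℝ :=
  stdNormalCDF ((y + μ * (T - t)) / (σ * √(T - t)))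

section DigitalPrice

variable {σ μ T y t : ℝ}

lemma contDiff_digitalPrice_space : ContDiff ℝ 2 fun z => digitalPrice σ μ T z t :=
  (contDiff_stdNormalCDF.of_le (WithTop.coe_le_coe.mpr le_top)).comp (by fun_prop)

lemma deriv_digitalPrice_space :
    deriv (fun z => digitalPrice σ μ T z t) = fun z =>
      stdNormalPDF ((z + μ * (T - t)) / (σ * √(T - t))) / (σ * √(T - t)) := by
  funext z
  exact ((hasDerivAt_stdNormalCDF _).comp z
    (((hasDerivAt_id' z).add_const _).div_const _)).deriv.trans (by simp [div_eq_mul_inv])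

lemma deriv_deriv_digitalPrice_space :
    deriv (deriv fun z => digitalPrice σ μ T z t) y =
      -((y + μ * (T - t)) / (σ * √(T - t))) * stdNormalPDF ((y + μ * (T - t)) / (σ * √(T - t))) /
        (σ * √(T - t)) ^ 2 := by
  rw [deriv_digitalPrice_space]
  exact ((((hasDerivAt_stdNormalPDF _).comp y
    (((hasDerivAt_id' y).add_const _).div_const _)).div_const _).deriv).trans (by ring)

lemma hasDerivAt_digitalPrice_time (hσ : σ ≠ 0) (ht : t < T) :
    HasDerivAt (fun s => digitalPrice σ μ T y s)
      (stdNormalPDF ((y + μ * (T - t)) / (σ * √(T - t))) *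
        ((y - μ * (T - t)) / (2 * σ * (T - t) * √(T - t)))) t := by
  have hτ : 0 < T - t := sub_pos.mpr ht
  have hsqrt : 0 < √(T - t) := sqrt_pos.mpr hτ
  have hT : HasDerivAt (fun s => T - s) (-1) t := by simpa using (hasDerivAt_id t).const_sub T
  have hd := ((hT.const_mul μ).const_add y).div (((hasDerivAt_sqrt hτ.ne').comp t hT).const_mul σ)
    (mul_ne_zero hσ hsqrt.ne')
  refine ((hasDerivAt_stdNormalCDF _).comp t hd).congr_deriv ?_
  have hsq : √(T - t) ^ 2 = T - t := sq_sqrt hτ.le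
  simp only [Pi.div_apply, Function.comp_apply]
  field_simp
  rw [hsq]
  ring

lemma kolmogorovOp_digitalPrice (hσ : σ ≠ 0) (ht : t < T) :
    kolmogorovOp σ μ (digitalPrice σ μ T) y t = 0 := by
  have hτ : 0 < T - t := sub_pos.mpr ht
  have hsq : √(T - t) ^ 2 = T - t := sq_sqrt hτ.le
  rw [kolmogorovOp, (hasDerivAt_digitalPrice_time hσ ht).deriv, deriv_deriv_digitalPrice_space,
    deriv_digitalPrice_space]
  field_simp
  rw [hsq]
  ring

end DigitalPrice

theorem w_satisfies_pde_general (σ c T : ℝ) (hσ : 0 < σ)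
    (w : ℝ → ℝ → ℝ)
    (hw : ∀ x > 0, ∀ t < T,
      w x t = stdNormalCDF ((Real.log x + (c - σ ^ 2 / 2) * (T - t)) / (σ * Real.sqrt (T - t))) -
        x ^ (1 - 2 * c / σ ^ 2) *
          stdNormalCDF ((Real.log (1 / x) + (c - σ ^ 2 / 2) * (T - t)) / (σ * Real.sqrt (T - t)))) :
    ∀ x > 0, ∀ t ∈ Set.Ioo 0 T,
      deriv (fun s => w x s) t +
        (1 / 2) * σ ^ 2 * x ^ 2 * deriv (deriv (fun y => w y t)) x +
        c * x * deriv (fun y => w y t) x = 0 := by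
  rintro x hx t ⟨-, ht⟩
  have hα : σ ^ 2 * (1 - 2 * c / σ ^ 2) = -2 * (c - σ ^ 2 / 2) := by field_simp; ring
  set u := digitalPrice σ (c - σ ^ 2 / 2) T
  set g := fun z s => u z s - exp ((1 - 2 * c / σ ^ 2) * z) * u (-z) s
  have hwg : ∀ y > 0, ∀ s < T, w y s = g (log y) s := by
    intro y hy s hs
    rw [hw y hy s hs, rpow_def_of_pos hy, one_div, log_inv, mul_comm (log y)]
    rfl
  have hu : ContDiff ℝ 2 fun z => u z t := contDiff_digitalPrice_space
  have hreflect : ContDiff ℝ 2 fun z => exp ((1 - 2 * c / σ ^ 2) * z) * u (-z) t :=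
    (contDiff_exp.comp (contDiff_const.mul contDiff_id)).mul (hu.comp contDiff_neg)
  have hut (y : ℝ) : DifferentiableAt ℝ (fun s => u y s) t :=
    (hasDerivAt_digitalPrice_time hσ.ne' ht).differentiableAt
  change blackScholesOp σ c w x t = 0
  rw [blackScholesOp_congr hwg hx ht, blackScholesOp_comp_log (g := g) (hu.sub hreflect) hx,
    kolmogorovOp_sub hu hreflect (hut _) ((hut _).const_mul _), kolmogorovOp_reflect hα hu,
    kolmogorovOp_digitalPrice hσ.ne' ht, kolmogorovOp_digitalPrice hσ.ne' ht]
  simp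

theorem w_satisfies_pde (σ c T : ℝ) (hσ : 0 < σ) (hT : 0 < T)
    (w : ℝ → ℝ → ℝ)
    (hw : ∀ x > 0, ∀ t < T,
      w x t = stdNormalCDF ((Real.log x + (c - σ ^ 2 / 2) * (T - t)) / (σ * Real.sqrt (T - t))) -
        x ^ (1 - 2 * c / σ ^ 2) *
          stdNormalCDF ((Real.log (1 / x) + (c - σ ^ 2 / 2) * (T - t)) / (σ * Real.sqrt (T - t)))) :
    ∀ x > 0, ∀ t ∈ Set.Ioo 0 T,
      deriv (fun s => w x s) t +
        (1 / 2) * σ ^ 2 * x ^ 2 * deriv (deriv (fun y => w y t)) x +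
        c * x * deriv (fun y => w y t) x = 0 :=
  w_satisfies_pde_general σ c T hσ w hw
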